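/- arXiv:1809.08796 — 2 statements merged into one kernel-verified Lean document; each statement's English description precedes it below -/
import Mathlib

section
/- Under Notation (*): let p = p' + (y) be an associated prime of J(H)^s, where p' is generated by variables in X. If p is not an associated prime of (J(H)^s : y), then p' is an associated prime of J(H')^s. -/
open MvPolynomial

noncomputable section

/-- A finite simple hypergraph on a vertex set `V`: edges are nonempty subsets of `V`
forming an antichain (a clutter). -/
structure FinHypergraph (σ : Type*) where
  V : Finset σ
  E : Finset (Finset σ)
  edge_sub : ∀ e ∈ E, e ⊆ V
  edge_nonempty : ∀ e ∈ E, e.Nonempty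
  simple : ∀ e ∈ E, ∀ f ∈ E, e ⊆ f → e = f

/-- The prime ideal generated by the variables indexed by `e`. -/
def primeOf {σ : Type*} (K : Type*) [Field K] (e : Finset σ) : Ideal (MvPolynomial σ K) :=
  Ideal.span ((fun i => (X i : MvPolynomial σ K)) '' e)

/-- The cover ideal of a set of edges: the intersection of the edge primes. -/
def coverIdeal {σ : Type*} (K : Type*) [Field K] (E : Finset (Finset σ)) :
    Ideal (MvPolynomial σ K) :=
  ⨅ e ∈ E, primeOf K e

/-- The squarefree monomial supported on `T`. -/
def xU {σ : Type*} (K : Type*) [Field K] (T : Finset σ) : MvPolynomial σ K :=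
  ∏ i ∈ T, X i
/-- `T` is a vertex cover of the edge set `E`. -/
def IsCover {σ : Type*} (E : Finset (Finset σ)) (T : Finset σ) : Prop :=
  ∀ e ∈ E, ∃ v ∈ e, v ∈ T

/-- `T` is a minimal vertex cover of the edge set `E`. -/
def IsMinimalCover {σ : Type*} (E : Finset (Finset σ)) (T : Finset σ) : Prop :=
  IsCover E T ∧ ∀ T' ⊂ T, ¬ IsCover E T'

/-- `m` is a minimal monomial generator of the monomial ideal `I`: it lies in `I`, and
every divisor of `m` lying in `I` is associated to `m`. -/
def IsMinMonGen {σ K : Type*} [Field K] (I : Ideal (MvPolynomial σ K))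
    (m : MvPolynomial σ K) : Prop :=
  m ∈ I ∧ ∀ d : MvPolynomial σ K, d ∣ m → d ∈ I → Associated d m

/-- `(V', E')` is a shadow of the hypergraph `H`. -/
def IsShadow {σ : Type*} [DecidableEq σ] (H : FinHypergraph σ) (V' : Finset σ) (E' : Finset (Finset σ)) : Prop :=
  V' ⊆ H.V ∧ (∀ e ∈ E', e ⊆ V') ∧ (∀ e ∈ E', e.Nonempty) ∧
    (∀ e ∈ E', ∀ f ∈ E', e ⊆ f → e = f) ∧
    E'.card = H.E.card ∧ ∀ e ∈ H.E, e ∩ V' ∈ E'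

/-- The cover ideal of a hypergraph on vertex set `V'` (edges `E'`, subsets of `V'`),
as an ideal of the small polynomial ring `K[V']`. -/
def smallCover {σ : Type*} [DecidableEq σ] (K : Type*) [Field K] (V' : Finset σ)
    (E' : Finset (Finset σ)) : Ideal (MvPolynomial {x : σ // x ∈ V'} K) :=
  ⨅ e ∈ E', primeOf K (e.subtype (· ∈ V'))

/-- `(V', E')` is an odd cycle graph `C_{2n+1}` for some positive `n`. -/
def IsOddCycle {σ : Type*} [DecidableEq σ] (V' : Finset σ) (E' : Finset (Finset σ)) : Prop :=
  ∃ n : ℕ, 0 < n ∧ ∃ f : Fin (2 * n + 1) → σ, Function.Injective f ∧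
    V' = Finset.univ.image f ∧ E' = Finset.univ.image (fun i => ({f i, f (i + 1)} : Finset σ))

/-!
Killing `y` sends each edge prime `(e)` into `(e ∖ y)`, so `J(H) + (y) = J(H') + (y)` and hence
`J(H)^s + (y) = J(H')^s + (y)`. As `p' + (y)` is not associated to the submodule `R ⧸ (J(H)^s : y)`
(embedded by multiplication with `y`), it is associated to the cokernel `R ⧸ (J(H')^s + (y))`.
Writing `K[V] = A[y]` with `A = K[X]`, both `p'` and `J(H')^s` are extended from ideals `𝔭, I` of
`A`. Since `A[y] ⧸ (IA[y] + (y)) ≅ A ⧸ I`, the prime `𝔭` is associated to `A ⧸ I`, and extending the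
colon ideal that witnesses this back to `A[y]` shows that `p'` is associated to `R ⧸ J(H')^s`.
-/

namespace Ideal
variable {R S : Type*} [CommRing R] [CommRing S]

theorem isAssociatedPrime_quotient_iff {p N : Ideal R} :
    IsAssociatedPrime p (R ⧸ N) ↔ p.IsPrime ∧ ∃ x : R, p = (N.colon {x}).radical := by
  have colon_bot : ∀ x : R, (⊥ : Submodule R (R ⧸ N)).colon {Quotient.mk N x} = N.colon {x} := by
    intro x
    ext r
    rw [Submodule.mem_colon_singleton, Submodule.mem_colon_singleton, Submodule.mem_bot,
      smul_eq_mul, Algebra.smul_def, Quotient.algebraMap_eq, ← map_mul, Quotient.eq_zero_iff_mem]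
  refine Submodule.isAssociatedPrime_def.trans (and_congr_right fun _ => ?_)
  constructor
  · rintro ⟨z, hz⟩
    obtain ⟨x, rfl⟩ := Quotient.mk_surjective z
    exact ⟨x, colon_bot x ▸ hz⟩
  · rintro ⟨x, hx⟩
    exact ⟨Quotient.mk N x, (colon_bot x).symm ▸ hx⟩

theorem comap_colon_singleton {F : Type*} [FunLike F R S] [RingHomClass F R S] (f : F)
    (I : Ideal S) (x : R) : (I.comap f).colon {x} = (I.colon {f x}).comap f := by
  ext r
  simp only [mem_comap, Submodule.mem_colon_singleton, smul_eq_mul, map_mul]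

theorem isAssociatedPrime_quotient_comap (e : R ≃+* S) {p N : Ideal S}
    (h : IsAssociatedPrime p (S ⧸ N)) : IsAssociatedPrime (p.comap e) (R ⧸ N.comap e) := by
  obtain ⟨hp, x, rfl⟩ := isAssociatedPrime_quotient_iff.mp h
  refine isAssociatedPrime_quotient_iff.mpr ⟨comap_isPrime e _, e.symm x, ?_⟩
  rw [comap_radical, comap_colon_singleton, e.apply_symm_apply]

theorem isAssociatedPrime_quotient_map_ringEquiv (e : R ≃+* S) {p N : Ideal R} :
    IsAssociatedPrime (p.map e) (S ⧸ N.map e) ↔ IsAssociatedPrime p (R ⧸ N) := by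
  refine ⟨fun h => ?_, fun h => ?_⟩
  · have := isAssociatedPrime_quotient_comap e h
    rwa [comap_map_of_bijective e e.bijective, comap_map_of_bijective e e.bijective] at this
  · have := isAssociatedPrime_quotient_comap e.symm h
    rwa [comap_symm, comap_symm] at this

def quotientColonMul (N : Ideal R) (x : R) : R ⧸ N.colon {x} →ₗ[R] R ⧸ N :=
  Submodule.mapQ _ _ (LinearMap.mulRight R x) fun _ hr => Submodule.mem_colon_singleton.mp hr

theorem quotientColonMul_mk (N : Ideal R) (x a : R) :
    quotientColonMul N x (Submodule.Quotient.mk a) = Submodule.Quotient.mk (a * x) := rfl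

theorem quotientColonMul_injective (N : Ideal R) (x : R) :
    Function.Injective (quotientColonMul N x) := by
  refine (injective_iff_map_eq_zero _).mpr fun z hz => ?_
  obtain ⟨a, rfl⟩ := Submodule.Quotient.mk_surjective _ z
  rw [quotientColonMul_mk, Submodule.Quotient.mk_eq_zero] at hz
  exact (Submodule.Quotient.mk_eq_zero _).mpr (Submodule.mem_colon_singleton.mpr hz)

theorem exact_quotientColonMul_factor (N : Ideal R) (x : R) :
    Function.Exact (quotientColonMul N x) (Submodule.factor (le_sup_left : N ≤ N ⊔ span {x})) := by
  intro z
  obtain ⟨a, rfl⟩ := Submodule.mkQ_surjective _ z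
  rw [Submodule.factor_mk, Submodule.mkQ_apply, Submodule.mkQ_apply,
    Submodule.Quotient.mk_eq_zero, Submodule.mem_sup]
  constructor
  · rintro ⟨n, hn, _, hc, rfl⟩
    obtain ⟨c, rfl⟩ := mem_span_singleton'.mp hc
    refine ⟨Submodule.Quotient.mk c, ?_⟩
    rw [quotientColonMul_mk, Submodule.Quotient.eq]
    simpa using hn
  · rintro ⟨w, hw⟩
    obtain ⟨c, rfl⟩ := Submodule.Quotient.mk_surjective _ w
    rw [quotientColonMul_mk, Submodule.Quotient.eq] at hw
    refine ⟨a - c * x, ?_, c * x, mem_span_singleton'.mpr ⟨c, rfl⟩, sub_add_cancel a _⟩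
    simpa using N.neg_mem hw

theorem isAssociatedPrime_quotient_sup_span_of_not_colon {p N : Ideal R} {x : R}
    (h : IsAssociatedPrime p (R ⧸ N)) (hx : ¬ IsAssociatedPrime p (R ⧸ N.colon (span {x}))) :
    IsAssociatedPrime p (R ⧸ (N ⊔ span {x})) := by
  rw [colon_span] at hx
  exact (associatedPrimes.subset_union_of_exact (quotientColonMul_injective N x)
    (exact_quotientColonMul_factor N x) h).resolve_left hx

theorem pow_sup_eq_of_sup_eq {I J L : Ideal R} (h : I ⊔ L = J ⊔ L) (n : ℕ) :
    I ^ n ⊔ L = J ^ n ⊔ L := by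
  have sup_eq : ∀ M : Ideal R, M ⊔ L = (M.map (Quotient.mk L)).comap (Quotient.mk L) := fun M => by
    rw [comap_map_of_surjective _ Quotient.mk_surjective, ← RingHom.ker_eq_comap_bot, mk_ker]
  have map_eq : ∀ M : Ideal R, M.map (Quotient.mk L) = (M ⊔ L).map (Quotient.mk L) := fun M => by
    rw [map_sup, map_quotient_self, sup_bot_eq]
  rw [sup_eq, sup_eq, Ideal.map_pow, Ideal.map_pow, map_eq I, map_eq J, h]

end Ideal

namespace Polynomial
open Ideal
variable {A : Type*} [CommRing A]

theorem mem_map_C_sup_span_X_iff {I : Ideal A} {q : A[X]} :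
    q ∈ I.map C ⊔ span {X} ↔ q.coeff 0 ∈ I := by
  constructor
  · intro hq
    obtain ⟨m, hm, _, hx, rfl⟩ := Submodule.mem_sup.mp hq
    obtain ⟨c, rfl⟩ := mem_span_singleton'.mp hx
    simpa using Ideal.mem_map_C_iff.mp hm 0
  · intro hq
    rw [← X_mul_divX_add q]
    exact add_mem (mem_sup_right (mem_span_singleton.mpr (dvd_mul_right _ _)))
      (mem_sup_left (mem_map_of_mem _ hq))

theorem map_C_iInf {ι : Sort*} (f : ι → Ideal A) : (⨅ i, f i).map C = ⨅ i, (f i).map C := by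
  ext q
  simp only [Ideal.mem_map_C_iff, Ideal.mem_iInf]
  exact forall_comm

theorem map_C_colon_singleton (I : Ideal A) (g : A) :
    (I.colon {g}).map C = (I.map C).colon {C g} := by
  ext q
  simp only [Submodule.mem_colon_singleton, smul_eq_mul, Ideal.mem_map_C_iff, coeff_mul_C]

theorem isAssociatedPrime_quotient_of_map_C_sup_span_X {p I : Ideal A}
    (h : IsAssociatedPrime (p.map C ⊔ span {X}) (A[X] ⧸ (I.map C ⊔ span {X}))) :
    IsAssociatedPrime p (A ⧸ I) := by
  obtain ⟨hP, f, hf⟩ := isAssociatedPrime_quotient_iff.mp h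
  have comap_eq : (p.map C ⊔ span {X}).comap C = p := by
    ext b
    rw [mem_comap, mem_map_C_sup_span_X_iff, coeff_C_zero]
  refine isAssociatedPrime_quotient_iff.mpr ⟨comap_eq ▸ hP.comap C, f.coeff 0, ?_⟩
  rw [← comap_eq, hf]
  ext b
  simp only [mem_comap, mem_radical_iff, Submodule.mem_colon_singleton, smul_eq_mul,
    mem_map_C_sup_span_X_iff, ← C_pow, coeff_C_mul]

theorem isAssociatedPrime_quotient_map_C {p I : Ideal A} (h : IsAssociatedPrime p (A ⧸ I)) :
    IsAssociatedPrime (p.map C) (A[X] ⧸ I.map C) := by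
  obtain ⟨hp, g, rfl⟩ := isAssociatedPrime_quotient_iff.mp h
  have hP := (isPrime_map_C_iff_isPrime _).mpr hp
  refine isAssociatedPrime_quotient_iff.mpr ⟨hP, C g, le_antisymm ?_ ?_⟩
  · exact (map_radical_le C).trans (radical_mono (map_C_colon_singleton I g).le)
  · exact hP.radical_le_iff.mpr ((map_C_colon_singleton I g).ge.trans (map_mono le_radical))

end Polynomial

theorem primeOf_mono {σ K : Type*} [Field K] {e f : Finset σ} (h : e ⊆ f) :
    primeOf K e ≤ primeOf K f :=
  Ideal.span_mono (Set.image_mono (Finset.coe_subset.mpr h))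

section

variable {σ K : Type*} [DecidableEq σ] [Field K]

theorem aeval_update_zero_mem_primeOf_erase (y : σ) {e : Finset σ} {u : MvPolynomial σ K}
    (hu : u ∈ primeOf K e) : aeval (Function.update X y 0) u ∈ primeOf K (e.erase y) := by
  suffices primeOf K e ≤ (primeOf K (e.erase y)).comap (aeval (Function.update X y 0)) from
    this hu
  refine Ideal.span_le.mpr ?_
  rintro _ ⟨i, hi, rfl⟩
  rw [SetLike.mem_coe, Ideal.mem_comap, aeval_X]
  obtain rfl | hiy := eq_or_ne i y
  · rw [Function.update_self]
    exact zero_mem _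
  · rw [Function.update_of_ne hiy]
    exact Ideal.subset_span ⟨i, Finset.mem_erase.mpr ⟨hiy, hi⟩, rfl⟩

theorem sub_aeval_update_zero_mem_span_X (y : σ) (u : MvPolynomial σ K) :
    u - aeval (Function.update X y 0) u ∈ Ideal.span {(X y : MvPolynomial σ K)} := by
  rw [← Ideal.Quotient.eq, ← Ideal.Quotient.mkₐ_eq_mk K, ← AlgHom.comp_apply]
  congr 1
  refine (MvPolynomial.algHom_ext fun i => ?_).symm
  rw [AlgHom.comp_apply, aeval_X]
  obtain rfl | hiy := eq_or_ne i y
  · rw [Function.update_self, map_zero, Ideal.Quotient.mkₐ_eq_mk, eq_comm,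
      Ideal.Quotient.eq_zero_iff_mem]
    exact Ideal.mem_span_singleton_self _
  · rw [Function.update_of_ne hiy]

theorem coverIdeal_sup_span_X_eq_image_erase (E : Finset (Finset σ)) (y : σ) :
    coverIdeal K E ⊔ Ideal.span {X y} = coverIdeal K (E.image (·.erase y)) ⊔ Ideal.span {X y} := by
  refine le_antisymm (sup_le ?_ le_sup_right) (sup_le_sup_right ?_ _)
  · intro u hu
    rw [← sub_add_cancel u (aeval (Function.update X y 0) u), add_comm]
    refine add_mem (Ideal.mem_sup_left ?_)
      (Ideal.mem_sup_right (sub_aeval_update_zero_mem_span_X y u))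
    rw [coverIdeal, Finset.iInf_finset_image]
    simp only [coverIdeal, Ideal.mem_iInf] at hu ⊢
    exact fun e he => aeval_update_zero_mem_primeOf_erase y (hu e he)
  · rw [coverIdeal, Finset.iInf_finset_image]
    exact le_iInf₂ fun e he => (iInf₂_le e he).trans (primeOf_mono (Finset.erase_subset y e))

theorem image_erase_eq_insert_erase {E : Finset (Finset σ)} {y : σ} {ey : Finset σ}
    (hey : ey ∈ E) (huniq : ∀ f ∈ E, y ∈ f → f = ey) :
    E.image (·.erase y) = insert (ey.erase y) (E.erase ey) := by
  ext f
  simp only [Finset.mem_image, Finset.mem_insert, Finset.mem_erase]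
  constructor
  · rintro ⟨e, he, rfl⟩
    by_cases hye : y ∈ e
    · exact .inl (by rw [huniq e he hye])
    · rw [Finset.erase_eq_of_notMem hye]
      by_cases hee : e = ey
      · exact .inl (by rw [← hee, Finset.erase_eq_of_notMem hye])
      · exact .inr ⟨hee, he⟩
  · rintro (rfl | ⟨hne, hf⟩)
    · exact ⟨ey, hey, rfl⟩
    · exact ⟨f, hf, Finset.erase_eq_of_notMem fun hy => hne (huniq f hf hy)⟩

end

namespace MvPolynomial
variable {σ : Type*} (K : Type*) [DecidableEq σ] [Field K]

def equivPolynomialSubtypeNe (y : σ) :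
    MvPolynomial σ K ≃+* Polynomial (MvPolynomial {b : σ // b ≠ y} K) :=
  ((renameEquiv K (Equiv.optionSubtypeNe y).symm).trans
    (optionEquivLeft K {b : σ // b ≠ y})).toRingEquiv

variable {K}

theorem equivPolynomialSubtypeNe_X_of_ne {y i : σ} (h : i ≠ y) :
    equivPolynomialSubtypeNe K y (X i) = Polynomial.C (X ⟨i, h⟩) := by
  simp [equivPolynomialSubtypeNe, Equiv.optionSubtypeNe_symm_of_ne h, optionEquivLeft_X_some]

theorem equivPolynomialSubtypeNe_X_self (y : σ) :
    equivPolynomialSubtypeNe K y (X y) = Polynomial.X := by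
  simp [equivPolynomialSubtypeNe, optionEquivLeft_X_none]

theorem map_equivPolynomialSubtypeNe_span_X (y : σ) :
    (Ideal.span {X y}).map (equivPolynomialSubtypeNe K y) = Ideal.span {Polynomial.X} := by
  rw [Ideal.map_span, Set.image_singleton, equivPolynomialSubtypeNe_X_self]

theorem map_equivPolynomialSubtypeNe_primeOf {y : σ} {e : Finset σ} (hy : y ∉ e) :
    (primeOf K e).map (equivPolynomialSubtypeNe K y)
      = (primeOf K (e.subtype (· ≠ y))).map Polynomial.C := by
  rw [primeOf, primeOf, Ideal.map_span, Ideal.map_span, Set.image_image, Set.image_image]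
  congr 1
  ext q
  simp only [Set.mem_image, Finset.mem_coe, Finset.mem_subtype]
  constructor
  · rintro ⟨i, hi, rfl⟩
    have hiy : i ≠ y := fun h => hy (h ▸ hi)
    exact ⟨⟨i, hiy⟩, hi, (equivPolynomialSubtypeNe_X_of_ne hiy).symm⟩
  · rintro ⟨i, hi, rfl⟩
    exact ⟨i, hi, equivPolynomialSubtypeNe_X_of_ne i.2⟩

theorem map_equivPolynomialSubtypeNe_coverIdeal {y : σ} {E : Finset (Finset σ)}
    (hE : ∀ e ∈ E, y ∉ e) :
    (coverIdeal K E).map (equivPolynomialSubtypeNe K y)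
      = (coverIdeal K (E.image (·.subtype (· ≠ y)))).map Polynomial.C := by
  rw [coverIdeal, coverIdeal, Finset.iInf_finset_image, ← Ideal.comap_symm, Ideal.comap_iInf,
    Polynomial.map_C_iInf]
  refine iInf_congr fun e => ?_
  rw [Ideal.comap_iInf, Polynomial.map_C_iInf]
  refine iInf_congr fun he => ?_
  rw [Ideal.comap_symm, map_equivPolynomialSubtypeNe_primeOf (hE e he)]

end MvPolynomial

/- `J(H')` is taken in the ambient ring `K[V]`, i.e. as the extension of the cover ideal of `H'`
from `K[X]`. -/

theorem shadow_assoc_of_not_assoc_colon_y_general {σ K : Type*} [DecidableEq σ] [Field K]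
    (H : FinHypergraph σ) (y : σ) (ey : Finset σ)
    (heyE : ey ∈ H.E)
    (huniq : ∀ f ∈ H.E, y ∈ f → f = ey)
    (s : ℕ) (F : Finset σ) (hF : F ⊆ H.V.erase y)
    (hass : IsAssociatedPrime (primeOf K F ⊔ Ideal.span {(X y : MvPolynomial σ K)})
        (MvPolynomial σ K ⧸ (coverIdeal K H.E) ^ s))
    (hnot : ¬ IsAssociatedPrime (primeOf K F ⊔ Ideal.span {(X y : MvPolynomial σ K)})
        (MvPolynomial σ K ⧸
          ((coverIdeal K H.E) ^ s).colon (Ideal.span {(X y : MvPolynomial σ K)}))) :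
    IsAssociatedPrime (primeOf K F)
      (MvPolynomial σ K ⧸ (coverIdeal K (insert (ey.erase y) (H.E.erase ey))) ^ s) := by
  rw [← image_erase_eq_insert_erase heyE huniq]
  have hyF : y ∉ F := fun hy => Finset.notMem_erase y H.V (hF hy)
  have hyE : ∀ e ∈ H.E.image (·.erase y), y ∉ e := by simp
  have hsup := Ideal.isAssociatedPrime_quotient_sup_span_of_not_colon hass hnot
  rw [Ideal.pow_sup_eq_of_sup_eq (coverIdeal_sup_span_X_eq_image_erase H.E y) s,
    ← Ideal.isAssociatedPrime_quotient_map_ringEquiv (equivPolynomialSubtypeNe K y),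
    Ideal.map_sup, Ideal.map_sup, Ideal.map_pow, map_equivPolynomialSubtypeNe_primeOf hyF,
    map_equivPolynomialSubtypeNe_coverIdeal hyE, map_equivPolynomialSubtypeNe_span_X,
    ← Ideal.map_pow] at hsup
  rw [← Ideal.isAssociatedPrime_quotient_map_ringEquiv (equivPolynomialSubtypeNe K y),
    Ideal.map_pow, map_equivPolynomialSubtypeNe_primeOf hyF,
    map_equivPolynomialSubtypeNe_coverIdeal hyE, ← Ideal.map_pow]
  exact Polynomial.isAssociatedPrime_quotient_map_C
    (Polynomial.isAssociatedPrime_quotient_of_map_C_sup_span_X hsup)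

/-- Under Notation (*): let `p = p' + (y) ∈ Ass(J(H)^s)` where `p'` is
generated by variables of `X`. If `p ∉ Ass(J(H)^s : y)`, then `p' ∈ Ass(J(H')^s)`. -/
theorem shadow_assoc_of_not_assoc_colon_y {σ K : Type*} [DecidableEq σ] [Field K]
    (H : FinHypergraph σ) (y : σ) (ey : Finset σ)
    (hyV : y ∈ H.V) (heyE : ey ∈ H.E) (hyey : y ∈ ey)
    (huniq : ∀ f ∈ H.E, y ∈ f → f = ey)
    (s : ℕ) (F : Finset σ) (hF : F ⊆ H.V.erase y)
    (hass : IsAssociatedPrime (primeOf K F ⊔ Ideal.span {(X y : MvPolynomial σ K)})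
        (MvPolynomial σ K ⧸ (coverIdeal K H.E) ^ s))
    (hnot : ¬ IsAssociatedPrime (primeOf K F ⊔ Ideal.span {(X y : MvPolynomial σ K)})
        (MvPolynomial σ K ⧸
          ((coverIdeal K H.E) ^ s).colon (Ideal.span {(X y : MvPolynomial σ K)}))) :
    IsAssociatedPrime (primeOf K F)
      (MvPolynomial σ K ⧸ (coverIdeal K (insert (ey.erase y) (H.E.erase ey))) ^ s) :=
  shadow_assoc_of_not_assoc_colon_y_general H y ey heyE huniq s F hF hass hnot
end
end

section
/- Under Notation (*): suppose p' ∈ Ass(J(H')^s) but p' ∉ Ass(J(H')^{s+1}) for some s>0 (so J(H') fails persistence at p'). If additionally p' ∉ Ass(J(H̃)^s) and p'+(y) ∉ Ass(J(H)^{s+1} : y), then p'+(y) ∈ Ass(J(H)^s) ∖ Ass(J(H)^{s+1}); in particular J(H) fails the persistence property. -/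
open MvPolynomial

noncomputable section

/- Notation (*): `H = (V, E)` is a hypergraph with `V = X ∪ {y}` where `X = V \ {y}`;
`y` belongs to exactly one edge `e_y ∈ E`; `e := e_y \ {y}`;
`H' = (X, (E \ {e_y}) ∪ {e})` is the shadow of `H` on `X`, with edge set
`insert (ey.erase y) (H.E.erase ey)`; `H̃ = H_X` is the induced subhypergraph on `X`,
with edge set `H.E.filter (· ⊆ H.V.erase y)`.  Cover ideals of `H'` and `H̃` are taken as
(cone) ideals of the ambient ring `K[V] = MvPolynomial σ K`, generated by the same monomials
as the corresponding ideals of `K[X]`. -/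

/-!
A monomial ideal of `K[σ]` is determined by its upper set of exponents: products become sums of
sets, the colon by a monomial `x^v` becomes the translate `{d | v + d ∈ C}`, and `P_G` is an
associated prime of `K[σ] ⧸ I` iff some such translate is the set of exponents meeting `G`.

Let `A`, `B` be the exponent sets of `J(H̃)` and of `P_(e_y ∖ {y})`; both ignore the exponent of
`y`, and `J(H)` has exponent set `A ∩ (B ∪ {d | d y ≠ 0})`, so that `J(H)^s : y^k` is
`J(H̃)^k J(H)^(s-k)` for `k ≤ s`. Along the chain `J(H')^s ⊆ J(H̃) J(H')^(s-1) ⊆ ⋯ ⊆ J(H̃)^s`,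
`P_F` is a monomial colon of the first ideal but not of the last; where it stops being the colon
by `x^u`, the monomial `x^u y^k` has colon `P_F + (y)` in `J(H)^s`. Conversely, if
`J(H)^(s+1) : x^v` is `P_F + (y)`, then `J(H')^(s+1) : x^v = P_F` when `y ∤ x^v`, and otherwise
`(J(H)^(s+1) : y) : x^v / y = P_F + (y)`.
-/

open Pointwise

theorem Submodule.mem_colon_bot_mk_iff {R : Type*} [CommRing R] {I : Ideal R} {x r : R} :
    r ∈ (⊥ : Submodule R (R ⧸ I)).colon {Ideal.Quotient.mk I x} ↔ r * x ∈ I := by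
  rw [Submodule.mem_colon_singleton, Submodule.mem_bot, Algebra.smul_def,
    Ideal.Quotient.algebraMap_eq, ← map_mul, Ideal.Quotient.eq_zero_iff_mem]

theorem FinHypergraph.filter_subset_erase_eq_erase {σ : Type*} [DecidableEq σ]
    (H : FinHypergraph σ) {y : σ} {ey : Finset σ} (hyey : y ∈ ey)
    (huniq : ∀ f ∈ H.E, y ∈ f → f = ey) :
    H.E.filter (fun f => f ⊆ H.V.erase y) = H.E.erase ey := by
  ext f
  simp only [Finset.mem_filter, Finset.mem_erase]
  constructor
  · rintro ⟨hf, hsub⟩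
    exact ⟨fun h => Finset.notMem_erase y H.V (hsub (h ▸ hyey)), hf⟩
  · rintro ⟨hne, hf⟩
    exact ⟨hf, fun x hx =>
      Finset.mem_erase.2 ⟨fun hxy => hne (huniq f hf (hxy ▸ hx)), H.edge_sub f hf hx⟩⟩

namespace ExponentSet

section Order

variable {α : Type*} [AddCommMonoid α] [PartialOrder α] [CanonicallyOrderedAdd α] {A B : Set α}

theorem isUpperSet_add (hB : IsUpperSet B) : IsUpperSet (A + B) := by
  rintro _ x hle ⟨a, ha, b, hb, rfl⟩
  obtain ⟨c, rfl⟩ := exists_add_of_le hle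
  exact ⟨a, ha, b + c, hB le_self_add hb, (add_assoc a b c).symm⟩

theorem univ_add (hB : IsUpperSet B) : Set.univ + B = B :=
  subset_antisymm (by rintro _ ⟨a, -, b, hb, rfl⟩; exact hB le_add_self hb)
    fun b hb => ⟨0, trivial, b, hb, zero_add b⟩

theorem add_univ (hA : IsUpperSet A) : A + Set.univ = A := by
  rw [add_comm, univ_add hA]

end Order

variable {σ : Type*}

/-- The `0`-fold sum is `univ` rather than `{0}`: it is the exponent set of the unit ideal, and
this keeps every `nfoldSum n C` of an upper set `C` upper. -/
def nfoldSum : ℕ → Set (σ →₀ ℕ) → Set (σ →₀ ℕ)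
  | 0, _ => Set.univ
  | n + 1, C => C + nfoldSum n C

def shift (C : Set (σ →₀ ℕ)) (v : σ →₀ ℕ) : Set (σ →₀ ℕ) := (v + ·) ⁻¹' C

def supportMeets (G : Finset σ) : Set (σ →₀ ℕ) := {d | ∃ i ∈ G, d i ≠ 0}

section

variable {C D S : Set (σ →₀ ℕ)} {G : Finset σ} {u v d : σ →₀ ℕ}

@[simp] theorem mem_shift : d ∈ shift C v ↔ v + d ∈ C := Iff.rfl

@[simp] theorem shift_zero : shift C 0 = C := by
  ext; simp

theorem shift_shift (v w : σ →₀ ℕ) : shift (shift C v) w = shift C (v + w) := by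
  ext; simp [add_assoc]

theorem shift_mono (h : C ⊆ D) (v : σ →₀ ℕ) : shift C v ⊆ shift D v :=
  Set.preimage_mono h

theorem isUpperSet_shift (hC : IsUpperSet C) (v : σ →₀ ℕ) : IsUpperSet (shift C v) :=
  fun _ _ hle h => hC (add_le_add_right hle v) h

theorem nfoldSum_succ (n : ℕ) (C : Set (σ →₀ ℕ)) : nfoldSum (n + 1) C = C + nfoldSum n C := rfl

theorem isUpperSet_nfoldSum (hC : IsUpperSet C) : ∀ n, IsUpperSet (nfoldSum n C)
  | 0 => isUpperSet_univ
  | _ + 1 => isUpperSet_add (isUpperSet_nfoldSum hC _)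

theorem nfoldSum_mono (h : C ⊆ D) : ∀ n, nfoldSum n C ⊆ nfoldSum n D
  | 0 => subset_rfl
  | n + 1 => Set.add_subset_add h (nfoldSum_mono h n)

theorem notMem_supportMeets : d ∉ supportMeets G ↔ ∀ i ∈ G, d i = 0 := by
  simp [supportMeets]

theorem isUpperSet_supportMeets (G : Finset σ) : IsUpperSet (supportMeets G) := by
  rintro a b hab ⟨i, hi, hai⟩
  exact ⟨i, hi, (Nat.pos_of_ne_zero hai).trans_le (hab i) |>.ne'⟩

theorem single_mem_supportMeets {i : σ} {n : ℕ} (hi : i ∈ G) (hn : n ≠ 0) :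
    Finsupp.single i n ∈ supportMeets G :=
  ⟨i, hi, by simpa using hn⟩

theorem sum_notMem_supportMeets {ι : Type*} (s : Finset ι) {u : ι → σ →₀ ℕ}
    (hu : ∀ j ∈ s, u j ∉ supportMeets G) : ∑ j ∈ s, u j ∉ supportMeets G := by
  simp only [notMem_supportMeets] at hu ⊢
  intro i hi
  simp [Finsupp.finsetSum_apply, Finset.sum_eq_zero fun j hj => hu j hj i hi]

theorem shift_supportMeets (hd : d ∉ supportMeets G) :
    shift (supportMeets G) d = supportMeets G := by
  rw [notMem_supportMeets] at hd
  ext e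
  simp only [mem_shift, supportMeets, Set.mem_ofPred_eq, Finsupp.add_apply]
  constructor <;> rintro ⟨i, hi, h⟩ <;> exact ⟨i, hi, by simpa [hd i hi] using h⟩

theorem supportMeets_insert [DecidableEq σ] (y : σ) (G : Finset σ) :
    supportMeets (insert y G) = supportMeets G ∪ supportMeets {y} := by
  ext d
  simp [supportMeets, or_comm]

theorem shift_eq_supportMeets (hS : IsUpperSet S) (hgen : ∀ i ∈ G, u + Finsupp.single i 1 ∈ S)
    (hsub : ∀ d, u + d ∈ S → d ∈ supportMeets G) : shift S u = supportMeets G := by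
  refine subset_antisymm hsub ?_
  rintro d ⟨i, hi, hdi⟩
  exact hS (add_le_add_right (Finsupp.single_le_iff.2 (Nat.one_le_iff_ne_zero.2 hdi)) u)
    (hgen i hi)

end

section

variable {A B C P Q : Set (σ →₀ ℕ)} {y : σ} {d : σ →₀ ℕ}

def IndepOf (y : σ) (C : Set (σ →₀ ℕ)) : Prop := ∀ d, d ∈ C ↔ d.erase y ∈ C

namespace IndepOf

theorem add_single_mem_iff (h : IndepOf y C) (k : ℕ) : d + Finsupp.single y k ∈ C ↔ d ∈ C := by
  rw [h, Finsupp.erase_add, Finsupp.erase_single, add_zero, ← h]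

theorem shift_single (h : IndepOf y C) (k : ℕ) : shift C (Finsupp.single y k) = C := by
  ext d
  rw [mem_shift, add_comm, h.add_single_mem_iff]

theorem shift_erase (h : IndepOf y C) (v : σ →₀ ℕ) : shift C (v.erase y) = shift C v := by
  ext d
  rw [mem_shift, mem_shift, h, h (v + d), Finsupp.erase_add, Finsupp.erase_add,
    Finsupp.erase_of_notMem_support (by simp)]

theorem inter (hA : IndepOf y A) (hB : IndepOf y B) : IndepOf y (A ∩ B) := fun d => by
  rw [Set.mem_inter_iff, Set.mem_inter_iff, ← hA, ← hB]

theorem add (hP : IndepOf y P) (hQ : IndepOf y Q) : IndepOf y (P + Q) := fun d => by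
  constructor
  · rintro ⟨p, hp, q, hq, rfl⟩
    rw [Finsupp.erase_add]
    exact Set.add_mem_add ((hP p).1 hp) ((hQ q).1 hq)
  · rintro ⟨p, hp, q, hq, hpq⟩
    refine ⟨p + Finsupp.single y (d y), (hP.add_single_mem_iff _).2 hp, q, hq, ?_⟩
    dsimp only at hpq ⊢
    rw [add_right_comm, hpq, Finsupp.erase_add_single]

theorem nfoldSum (h : IndepOf y C) : ∀ n, IndepOf y (nfoldSum n C)
  | 0 => fun _ => Iff.rfl
  | n + 1 => h.add (nfoldSum h n)

end IndepOf

theorem indepOf_biInter {ι : Type*} {s : Set ι} {D : ι → Set (σ →₀ ℕ)}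
    (h : ∀ i ∈ s, IndepOf y (D i)) : IndepOf y (⋂ i ∈ s, D i) := fun d => by
  simp only [Set.mem_iInter₂]
  exact forall₂_congr fun i hi => h i hi d

theorem indepOf_supportMeets {G : Finset σ} (hy : y ∉ G) : IndepOf y (supportMeets G) :=
  fun d => by
    simp only [supportMeets, Set.mem_ofPred_eq]
    exact exists_congr fun i =>
      and_congr_right fun hi => by rw [Finsupp.erase_ne (ne_of_mem_of_not_mem hi hy)]

/-- The atom `single y 1` of `σ →₀ ℕ` is carried by one of the two summands. -/
theorem shift_add_single_one (P Q : Set (σ →₀ ℕ)) (y : σ) :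
    shift (P + Q) (Finsupp.single y 1) =
      (shift P (Finsupp.single y 1) + Q) ∪ (P + shift Q (Finsupp.single y 1)) := by
  ext d
  constructor
  · rintro ⟨p, hp, q, hq, hpq⟩
    dsimp only at hpq
    have hy : 1 ≤ p y ∨ 1 ≤ q y := by
      have := congrArg (· y) hpq
      simp only [Finsupp.add_apply, Finsupp.single_eq_same] at this
      omega
    rcases hy with hy | hy
    · obtain ⟨p', rfl⟩ := exists_add_of_le (Finsupp.single_le_iff.2 hy)
      refine Or.inl ⟨p', hp, q, hq, add_left_cancel (a := Finsupp.single y 1) ?_⟩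
      rw [← add_assoc, hpq]
    · obtain ⟨q', rfl⟩ := exists_add_of_le (Finsupp.single_le_iff.2 hy)
      refine Or.inr ⟨p, hp, q', hq, add_left_cancel (a := Finsupp.single y 1) ?_⟩
      dsimp only
      rw [← hpq, add_left_comm]
  · rintro (⟨p, hp, q, hq, rfl⟩ | ⟨p, hp, q, hq, rfl⟩)
    · exact ⟨_, hp, q, hq, by dsimp only; rw [add_assoc]⟩
    · exact ⟨p, hp, _, hq, by dsimp only; rw [add_left_comm]⟩

end

section

variable {A B : Set (σ →₀ ℕ)} {y : σ} {s k : ℕ} {x : σ →₀ ℕ}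

/-- If `A` and `B` are the exponent sets of `J(H̃)` and of the prime of `e_y ∖ {y}`, then
`extendByVar y A B` is the exponent set of `J(H)` and `A ∩ B` that of `J(H')`. -/
def extendByVar (y : σ) (A B : Set (σ →₀ ℕ)) : Set (σ →₀ ℕ) := A ∩ (B ∪ supportMeets {y})

/-- For `A`, `J` the exponent sets of `J(H̃)`, `J(H')`, this is that of `J(H̃)^k J(H')^(s-k)`. -/
def mixedSum (A J : Set (σ →₀ ℕ)) (s k : ℕ) : Set (σ →₀ ℕ) := nfoldSum k A + nfoldSum (s - k) J

theorem inter_subset_extendByVar : A ∩ B ⊆ extendByVar y A B :=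
  Set.inter_subset_inter_right A Set.subset_union_left

theorem extendByVar_subset : extendByVar y A B ⊆ A := Set.inter_subset_left

theorem isUpperSet_extendByVar (hA : IsUpperSet A) (hB : IsUpperSet B) :
    IsUpperSet (extendByVar y A B) :=
  hA.inter (hB.union (isUpperSet_supportMeets _))

theorem shift_extendByVar_single (hAy : IndepOf y A) :
    shift (extendByVar y A B) (Finsupp.single y 1) = A := by
  ext d
  rw [mem_shift, add_comm]
  refine ⟨fun h => (hAy.add_single_mem_iff 1).1 h.1,
    fun h => ⟨(hAy.add_single_mem_iff 1).2 h, Or.inr ⟨y, Finset.mem_singleton_self y, ?_⟩⟩⟩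
  simp

theorem mem_nfoldSum_inter_of_apply_eq_zero :
    ∀ {n : ℕ} {d : σ →₀ ℕ}, d ∈ nfoldSum n (extendByVar y A B) → d y = 0 →
      d ∈ nfoldSum n (A ∩ B)
  | 0, _, _, _ => trivial
  | _ + 1, _, ⟨a, ⟨haA, haB⟩, c, hc, rfl⟩, hy => by
    rw [Finsupp.add_apply, Nat.add_eq_zero_iff] at hy
    refine ⟨a, ⟨haA, haB.resolve_right ?_⟩, c, mem_nfoldSum_inter_of_apply_eq_zero hc hy.2, rfl⟩
    simpa [supportMeets] using hy.1

theorem shift_nfoldSum_succ_single (hAy : IndepOf y A) (t : ℕ) :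
    shift (nfoldSum (t + 1) (extendByVar y A B)) (Finsupp.single y 1) =
      A + nfoldSum t (extendByVar y A B) := by
  rw [nfoldSum_succ, shift_add_single_one, shift_extendByVar_single hAy]
  cases t with
  | zero =>
    exact Set.union_eq_left.2 (Set.add_subset_add_right extendByVar_subset)
  | succ t =>
    rw [shift_nfoldSum_succ_single hAy t, add_left_comm, ← nfoldSum_succ, Set.union_self]

theorem shift_nfoldSum_single (hA : IsUpperSet A) (hB : IsUpperSet B) (hAy : IndepOf y A) :
    ∀ {k : ℕ}, k ≤ s → shift (nfoldSum s (extendByVar y A B)) (Finsupp.single y k) =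
      nfoldSum k A + nfoldSum (s - k) (extendByVar y A B)
  | 0, _ => by
    rw [Finsupp.single_zero, shift_zero, Nat.sub_zero]
    exact (univ_add (isUpperSet_nfoldSum (isUpperSet_extendByVar hA hB) s)).symm
  | k + 1, hk => by
    obtain ⟨t, ht⟩ : ∃ t, s - k = t + 1 := ⟨s - k - 1, by omega⟩
    rw [Finsupp.single_add, ← shift_shift, shift_nfoldSum_single hA hB hAy (by omega : k ≤ s),
      shift_add_single_one, (hAy.nfoldSum k).shift_single, ht, shift_nfoldSum_succ_single hAy,
      show s - (k + 1) = t by omega]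
    have hsum : nfoldSum k A + (A + nfoldSum t (extendByVar y A B)) =
        nfoldSum (k + 1) A + nfoldSum t (extendByVar y A B) := by
      rw [nfoldSum_succ, add_assoc, add_left_comm]
    rw [← hsum]
    exact Set.union_eq_right.2
      (Set.add_subset_add_left (Set.add_subset_add_right extendByVar_subset))

theorem add_single_mem_nfoldSum_iff (hA : IsUpperSet A) (hB : IsUpperSet B)
    (hAy : IndepOf y A) (hk : k ≤ s) (hx : x y = 0) :
    x + Finsupp.single y k ∈ nfoldSum s (extendByVar y A B) ↔ x ∈ mixedSum A (A ∩ B) s k := by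
  rw [add_comm, ← mem_shift, shift_nfoldSum_single hA hB hAy hk]
  constructor
  · rintro ⟨a, ha, c, hc, rfl⟩
    rw [Finsupp.add_apply, Nat.add_eq_zero_iff] at hx
    exact ⟨a, ha, c, mem_nfoldSum_inter_of_apply_eq_zero hc hx.2, rfl⟩
  · exact fun h => Set.add_subset_add_left (nfoldSum_mono inter_subset_extendByVar _) h

end

section

variable {A B J : Set (σ →₀ ℕ)} {y : σ} {F : Finset σ} {n s k : ℕ} {u v : σ →₀ ℕ}

theorem IndepOf.mixedSum (hA : IndepOf y A) (hJ : IndepOf y J) (s k : ℕ) :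
    IndepOf y (mixedSum A J s k) :=
  (hA.nfoldSum k).add (hJ.nfoldSum _)

theorem mixedSum_zero (hJ : IsUpperSet J) : mixedSum A J s 0 = nfoldSum s J :=
  univ_add (isUpperSet_nfoldSum hJ s)

theorem mixedSum_self (hA : IsUpperSet A) : mixedSum A J s s = nfoldSum s A := by
  rw [mixedSum, Nat.sub_self]
  exact add_univ (isUpperSet_nfoldSum hA s)

theorem mixedSum_subset_succ (hJA : J ⊆ A) (hk : k < s) :
    mixedSum A J s k ⊆ mixedSum A J s (k + 1) := by
  obtain ⟨t, ht⟩ : ∃ t, s - k = t + 1 := ⟨s - k - 1, by omega⟩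
  rw [mixedSum, mixedSum, ht, show s - (k + 1) = t by omega, nfoldSum_succ, nfoldSum_succ,
    add_left_comm, add_assoc]
  exact Set.add_subset_add_right hJA

variable [DecidableEq σ]

theorem shift_nfoldSum_extendByVar_eq (hA : IsUpperSet A) (hB : IsUpperSet B)
    (hAy : IndepOf y A) (hyF : y ∉ F) (hk : k < s) (hu : u y = 0)
    (hshift : shift (mixedSum A (A ∩ B) s k) u = supportMeets F)
    (hmem : u ∈ mixedSum A (A ∩ B) s (k + 1)) :
    shift (nfoldSum s (extendByVar y A B)) (u + Finsupp.single y k) =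
      supportMeets (insert y F) := by
  refine shift_eq_supportMeets (isUpperSet_nfoldSum (isUpperSet_extendByVar hA hB) s)
    (fun i hi => ?_) fun d hd => ?_
  · rcases Finset.mem_insert.1 hi with rfl | hi
    · rwa [add_assoc, ← Finsupp.single_add, add_single_mem_nfoldSum_iff hA hB hAy hk hu]
    · have hiy : i ≠ y := ne_of_mem_of_not_mem hi hyF
      rw [add_right_comm,
        add_single_mem_nfoldSum_iff hA hB hAy hk.le (by simp [hu, hiy]),
        ← mem_shift, hshift]
      exact single_mem_supportMeets hi one_ne_zero
  · rw [supportMeets_insert]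
    by_cases hdy : d y = 0
    · rw [add_right_comm, add_single_mem_nfoldSum_iff hA hB hAy hk.le (by simp [hu, hdy]),
        ← mem_shift, hshift] at hd
      exact Or.inl hd
    · exact Or.inr ⟨y, Finset.mem_singleton_self y, hdy⟩

/-- Walk up the chain `J(H')^s = M_0 ⊆ M_1 ⊆ ⋯ ⊆ M_s = J(H̃)^s` of mixed products: either the
colon stays `P_F` at the next step, or an element of `M_(k+1)` yields the witness `u y^k`. -/
theorem exists_shift_nfoldSum_extendByVar_of_mixedSum (hA : IsUpperSet A) (hB : IsUpperSet B)
    (hAy : IndepOf y A) (hBy : IndepOf y B) (hyF : y ∉ F)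
    (hAs : ∀ v, shift (nfoldSum s A) v ≠ supportMeets F) {k : ℕ} {u : σ →₀ ℕ} (hk : k ≤ s)
    (hu : u y = 0) (hshift : shift (mixedSum A (A ∩ B) s k) u = supportMeets F) :
    ∃ w, shift (nfoldSum s (extendByVar y A B)) w = supportMeets (insert y F) := by
  rcases hk.lt_or_eq with hk | rfl
  swap
  · exact absurd (mixedSum_self hA ▸ hshift) (hAs u)
  by_cases hsub : shift (mixedSum A (A ∩ B) s (k + 1)) u ⊆ supportMeets F
  · exact exists_shift_nfoldSum_extendByVar_of_mixedSum hA hB hAy hBy hyF hAs hk hu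
      (hsub.antisymm (hshift ▸ shift_mono (mixedSum_subset_succ Set.inter_subset_left hk) u))
  obtain ⟨d, hd, hdF⟩ := Set.not_subset.1 hsub
  refine ⟨u + d.erase y + Finsupp.single y k,
    shift_nfoldSum_extendByVar_eq hA hB hAy hyF hk (by simp [hu]) ?_ ?_⟩
  · rw [← shift_shift, hshift, shift_supportMeets (mt ((indepOf_supportMeets hyF) d).2 hdF)]
  · have := ((hAy.mixedSum (hAy.inter hBy) s (k + 1)) (u + d)).1 hd
    rwa [Finsupp.erase_add, Finsupp.erase_of_notMem_support (by simpa using hu)] at this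
termination_by s - k

theorem exists_shift_nfoldSum_extendByVar (hA : IsUpperSet A) (hB : IsUpperSet B)
    (hAy : IndepOf y A) (hBy : IndepOf y B) (hyF : y ∉ F)
    (hAB : ∃ v, shift (nfoldSum s (A ∩ B)) v = supportMeets F)
    (hAs : ∀ v, shift (nfoldSum s A) v ≠ supportMeets F) :
    ∃ w, shift (nfoldSum s (extendByVar y A B)) w = supportMeets (insert y F) := by
  obtain ⟨v, hv⟩ := hAB
  refine exists_shift_nfoldSum_extendByVar_of_mixedSum hA hB hAy hBy hyF hAs (Nat.zero_le s)
    (u := v.erase y) Finsupp.erase_same ?_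
  rw [mixedSum_zero (hA.inter hB), ((hAy.inter hBy).nfoldSum s).shift_erase, hv]

theorem shift_nfoldSum_inter_eq (hAy : IndepOf y A) (hBy : IndepOf y B) (hyF : y ∉ F)
    (hv : v y = 0) (h : shift (nfoldSum n (extendByVar y A B)) v = supportMeets (insert y F)) :
    shift (nfoldSum n (A ∩ B)) v = supportMeets F := by
  ext d
  have hvd : (v + d.erase y) y = 0 := by simp [hv]
  have hF : d.erase y ∈ supportMeets F ↔ d.erase y ∈ supportMeets (insert y F) := by
    rw [supportMeets_insert, Set.mem_union, or_iff_left]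
    simp [supportMeets]
  rw [mem_shift, (hAy.inter hBy).nfoldSum n, Finsupp.erase_add,
    Finsupp.erase_of_notMem_support (by simpa using hv), indepOf_supportMeets hyF d, hF, ← h,
    mem_shift]
  exact ⟨fun h => nfoldSum_mono inter_subset_extendByVar n h,
    fun h => mem_nfoldSum_inter_of_apply_eq_zero h hvd⟩

theorem exists_shift_inter_or_exists_shift_shift_single (hAy : IndepOf y A) (hBy : IndepOf y B)
    (hyF : y ∉ F) (h : shift (nfoldSum n (extendByVar y A B)) v = supportMeets (insert y F)) :
    (∃ v', shift (nfoldSum n (A ∩ B)) v' = supportMeets F) ∨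
      ∃ v', shift (shift (nfoldSum n (extendByVar y A B)) (Finsupp.single y 1)) v' =
        supportMeets (insert y F) := by
  by_cases hv : v y = 0
  · exact Or.inl ⟨v, shift_nfoldSum_inter_eq hAy hBy hyF hv h⟩
  · obtain ⟨v', rfl⟩ := exists_add_of_le (Finsupp.single_le_iff.2 (Nat.one_le_iff_ne_zero.2 hv))
    exact Or.inr ⟨v', by rwa [shift_shift]⟩

end

section Ideal

variable {C : Set (σ →₀ ℕ)} {u v : σ →₀ ℕ} (R : Type*) [CommSemiring R]

def toIdeal (C : Set (σ →₀ ℕ)) : Ideal (MvPolynomial σ R) :=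
  Ideal.span ((fun d => monomial d (1 : R)) '' C)

variable {R}

theorem mem_toIdeal (hC : IsUpperSet C) {f : MvPolynomial σ R} :
    f ∈ toIdeal R C ↔ ∀ a ∈ f.support, a ∈ C := by
  rw [toIdeal, mem_ideal_span_monomial_image]
  exact forall₂_congr fun a _ => ⟨fun ⟨c, hc, hle⟩ => hC hle hc, fun h => ⟨a, h, le_rfl⟩⟩

theorem monomial_mem_toIdeal [Nontrivial R] (hC : IsUpperSet C) :
    monomial v (1 : R) ∈ toIdeal R C ↔ v ∈ C := by
  classical
  rw [mem_toIdeal hC, support_monomial, if_neg one_ne_zero]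
  simp

theorem monomial_mul_mem_toIdeal (hC : IsUpperSet C) {f : MvPolynomial σ R} :
    monomial u (1 : R) * f ∈ toIdeal R C ↔ ∀ a ∈ f.support, a ∈ shift C u := by
  rw [mem_toIdeal hC]
  constructor
  · intro h a ha
    apply h
    rwa [mem_support_iff, coeff_monomial_mul, one_mul, ← mem_support_iff]
  · intro h c hc
    rw [mem_support_iff, coeff_monomial_mul'] at hc
    split_ifs at hc with huc
    · rw [one_mul, ← mem_support_iff] at hc
      simpa [add_tsub_cancel_of_le huc] using h _ hc
    · exact absurd rfl hc

theorem toIdeal_add (C D : Set (σ →₀ ℕ)) : toIdeal R (C + D) = toIdeal R C * toIdeal R D := by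
  rw [toIdeal, toIdeal, toIdeal, Ideal.span_mul_span', ← Set.image2_add, Set.image_image2,
    ← Set.image2_mul, Set.image2_image_left, Set.image2_image_right]
  simp_rw [monomial_mul, one_mul]

theorem toIdeal_univ : toIdeal R (Set.univ : Set (σ →₀ ℕ)) = ⊤ :=
  (Ideal.eq_top_iff_one _).2 (Ideal.subset_span ⟨0, trivial, by simp⟩)

theorem toIdeal_nfoldSum (C : Set (σ →₀ ℕ)) : ∀ n, toIdeal R (nfoldSum n C) = toIdeal R C ^ n
  | 0 => by rw [pow_zero, Ideal.one_eq_top]; exact toIdeal_univ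
  | n + 1 => by rw [pow_succ', nfoldSum_succ, toIdeal_add, toIdeal_nfoldSum C n]

theorem toIdeal_shift (hC : IsUpperSet C) (v : σ →₀ ℕ) :
    toIdeal R (shift C v) = (toIdeal R C).colon (Ideal.span {monomial v (1 : R)}) := by
  ext r
  rw [Submodule.mem_colon_span_singleton, smul_eq_mul, mul_comm, monomial_mul_mem_toIdeal hC,
    mem_toIdeal (isUpperSet_shift hC v)]

end Ideal

section

variable {T : Set (σ →₀ ℕ)} {G : Finset σ}

/-- Otherwise each `D a` has an element outside `supportMeets G`, and the sum of these elements
lies in every `D a`. -/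
theorem exists_eq_supportMeets_of_biInter_eq {ι : Type*} {s : Finset ι} {D : ι → Set (σ →₀ ℕ)}
    (hD : ∀ a ∈ s, IsUpperSet (D a)) (h : ⋂ a ∈ s, D a = supportMeets G) :
    ∃ a ∈ s, D a = supportMeets G := by
  by_contra! hne
  have hout : ∀ a ∈ s, ∃ u ∈ D a, u ∉ supportMeets G := fun a ha => by
    by_contra! hsub
    exact hne a ha (subset_antisymm hsub (h ▸ Set.biInter_subset_of_mem ha))
  choose! u hu huG using hout
  refine sum_notMem_supportMeets s huG (h ▸ Set.mem_iInter₂.2 fun a ha => ?_)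
  exact hD a ha (Finset.single_le_sum (fun _ _ => zero_le) ha) (hu a ha)

/-- Take `w` with `shift T w ⊆ supportMeets G` and `∑ i ∈ G, (n i - w i)` minimal. For every
`i ∈ G` some `u i ∉ supportMeets G` has `w + single i 1 + u i ∈ T`, and `v = w + ∑ i, u i`
works. -/
theorem exists_shift_eq_supportMeets (hT : IsUpperSet T) (n : σ → ℕ)
    (hn : ∀ i ∈ G, Finsupp.single i (n i) ∈ T) (hTG : T ⊆ supportMeets G) :
    ∃ v, shift T v = supportMeets G := by
  obtain ⟨w, hw, hmin⟩ := (measure fun w : σ →₀ ℕ => ∑ i ∈ G, (n i - w i)).wf.has_min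
    {w | shift T w ⊆ supportMeets G} ⟨0, by simpa using hTG⟩
  have hlt : ∀ i ∈ G, w i < n i := fun i hi => by
    by_contra! hle
    have h0 : w + 0 ∈ T := hT (by simpa using Finsupp.single_le_iff.2 hle) (hn i hi)
    simpa [supportMeets] using hw h0
  have hstep : ∀ i ∈ G, ∃ u ∉ supportMeets G, w + Finsupp.single i 1 + u ∈ T := fun i hi => by
    by_contra! hsub
    refine hmin (w + Finsupp.single i 1) (fun d hd => by_contra fun hd' => hsub d hd' hd) ?_
    change ∑ j ∈ G, (n j - (w + Finsupp.single i 1 : σ →₀ ℕ) j) < ∑ j ∈ G, (n j - w j)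
    refine Finset.sum_lt_sum (fun j _ => by simp only [Finsupp.add_apply]; omega)
      ⟨i, hi, by have := hlt i hi; simp only [Finsupp.add_apply, Finsupp.single_eq_same]; omega⟩
  choose! u huG hu using hstep
  have hU := sum_notMem_supportMeets G huG
  refine ⟨w + ∑ i ∈ G, u i, shift_eq_supportMeets hT (fun i hi => ?_) fun d hd => ?_⟩
  · refine hT ?_ (hu i hi)
    rw [add_right_comm]
    gcongr
    exact Finset.single_le_sum (fun _ _ => zero_le) hi
  · rw [← shift_supportMeets hU, mem_shift]
    exact hw (by rwa [mem_shift, ← add_assoc])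

end

section

variable {K : Type*} [Field K] {C : Set (σ →₀ ℕ)} {G : Finset σ}

theorem primeOf_eq_toIdeal (G : Finset σ) : primeOf K G = toIdeal K (supportMeets G) := by
  ext f
  rw [mem_toIdeal (isUpperSet_supportMeets G)]
  exact mem_ideal_span_X_image

/-- `primeOf K G` is the kernel of the substitution `φ` killing the variables in `G`, because
`f - φ f ∈ primeOf K G` for every `f`. -/
theorem primeOf_isPrime (G : Finset σ) : (primeOf K G).IsPrime := by
  classical
  set φ : MvPolynomial σ K →ₐ[K] MvPolynomial σ K := aeval fun i => if i ∈ G then 0 else X i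
  have hsub : ∀ f, f - φ f ∈ primeOf K G := fun f => by
    induction f using MvPolynomial.induction_on with
    | C a => simp [φ]
    | add p q hp hq => rw [map_add, add_sub_add_comm]; exact add_mem hp hq
    | mul_X p i hp =>
      rw [map_mul, show p * X i - φ p * φ (X i) = (p - φ p) * X i + φ p * (X i - φ (X i)) by ring]
      refine add_mem (Ideal.mul_mem_right _ _ hp) (Ideal.mul_mem_left _ _ ?_)
      by_cases hi : i ∈ G
      · have hXi : X i ∈ primeOf K G := Ideal.subset_span ⟨i, hi, rfl⟩
        simpa [φ, hi] using hXi
      · simp [φ, hi]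
  have hker : primeOf K G = RingHom.ker φ := by
    refine le_antisymm (Ideal.span_le.2 ?_) fun f hf => ?_
    · rintro _ ⟨i, hi, rfl⟩
      simp [φ, Finset.mem_coe.1 hi]
    · simpa [RingHom.mem_ker.1 hf] using hsub f
  rw [hker]
  exact RingHom.ker_isPrime _

theorem primeOf_insert [DecidableEq σ] (y : σ) (F : Finset σ) :
    primeOf K (insert y F) = primeOf K F ⊔ Ideal.span {(X y : MvPolynomial σ K)} := by
  rw [primeOf, primeOf, Finset.coe_insert, Set.image_insert_eq, Ideal.span_insert, sup_comm]

theorem coverIdeal_eq_toIdeal (E : Finset (Finset σ)) :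
    coverIdeal K E = toIdeal K (⋂ e ∈ E, supportMeets e) := by
  ext g
  rw [coverIdeal, mem_toIdeal (isUpperSet_iInter₂ fun e _ => isUpperSet_supportMeets e)]
  simp only [Ideal.mem_iInf, primeOf_eq_toIdeal, mem_toIdeal (isUpperSet_supportMeets _),
    Set.mem_iInter]
  exact ⟨fun h a ha e he => h e he a ha, fun h e he a ha => h a ha e he⟩

/-- If `√(I : f) = P_G` for `I = toIdeal K C`, the exponents `u` with `x^u f ∈ I` form an upper set
`T ⊆ supportMeets G` containing a power of each `x_i`, `i ∈ G`. A translate of `T` equal to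
`supportMeets G` is an intersection of translates of `C`, one of which must then be equal to it. -/
theorem isAssociatedPrime_primeOf_iff (hC : IsUpperSet C) :
    IsAssociatedPrime (primeOf K G) (MvPolynomial σ K ⧸ toIdeal K C) ↔
      ∃ v, shift C v = supportMeets G := by
  constructor
  · rintro ⟨-, x, hx⟩
    obtain ⟨f, rfl⟩ := Ideal.Quotient.mk_surjective x
    set T := ⋂ a ∈ f.support, shift C a
    have hT : ∀ u, monomial u (1 : K) * f ∈ toIdeal K C ↔ u ∈ T := fun u => by
      simp [T, monomial_mul_mem_toIdeal hC, add_comm]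
    have hprime : ∀ u ∈ T, monomial u (1 : K) ∈ primeOf K G := fun u hu =>
      hx ▸ Ideal.le_radical (Submodule.mem_colon_bot_mk_iff.2 ((hT u).2 hu))
    have hpow : ∀ i ∈ G, ∃ m, Finsupp.single i m ∈ T := fun i hi => by
      have hXi : (X i : MvPolynomial σ K) ∈ primeOf K G := Ideal.subset_span ⟨i, hi, rfl⟩
      obtain ⟨m, hm⟩ := Ideal.mem_radical_iff.1 (hx ▸ hXi)
      rw [Submodule.mem_colon_bot_mk_iff, X_pow_eq_monomial, hT] at hm
      exact ⟨m, hm⟩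
    choose! n hn using hpow
    obtain ⟨v, hv⟩ := exists_shift_eq_supportMeets
      (isUpperSet_iInter₂ fun a _ => isUpperSet_shift hC a) n hn fun u hu =>
        (monomial_mem_toIdeal (isUpperSet_supportMeets G)).1
          (primeOf_eq_toIdeal (K := K) G ▸ hprime u hu)
    have hTv : shift T v = ⋂ a ∈ f.support, shift C (a + v) := by
      ext
      simp [T, add_assoc]
    obtain ⟨a, -, ha⟩ := exists_eq_supportMeets_of_biInter_eq
      (fun a _ => isUpperSet_shift hC (a + v)) (hTv ▸ hv)
    exact ⟨a + v, ha⟩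
  · rintro ⟨v, hv⟩
    refine ⟨primeOf_isPrime G, Ideal.Quotient.mk _ (monomial v 1), ?_⟩
    have hcolon : (⊥ : Submodule _ (MvPolynomial σ K ⧸ toIdeal K C)).colon
        {Ideal.Quotient.mk _ (monomial v 1)} = primeOf K G := by
      ext r
      rw [Submodule.mem_colon_bot_mk_iff, ← smul_eq_mul, ← Submodule.mem_colon_span_singleton,
        ← toIdeal_shift hC, hv, primeOf_eq_toIdeal]
    rw [hcolon, (primeOf_isPrime G).radical]

end

end ExponentSet

open ExponentSet in
theorem persistence_fails_general {σ K : Type*} [DecidableEq σ] [Field K]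
    (H : FinHypergraph σ) (y : σ) (ey : Finset σ)
    (heyE : ey ∈ H.E) (hyey : y ∈ ey)
    (huniq : ∀ f ∈ H.E, y ∈ f → f = ey)
    (s : ℕ) (F : Finset σ) (hF : F ⊆ H.V.erase y)
    (h1 : IsAssociatedPrime (primeOf K F)
        (MvPolynomial σ K ⧸ (coverIdeal K (insert (ey.erase y) (H.E.erase ey))) ^ s))
    (h2 : ¬ IsAssociatedPrime (primeOf K F)
        (MvPolynomial σ K ⧸ (coverIdeal K (insert (ey.erase y) (H.E.erase ey))) ^ (s + 1)))
    (h3 : ¬ IsAssociatedPrime (primeOf K F)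
        (MvPolynomial σ K ⧸ (coverIdeal K (H.E.filter (fun f => f ⊆ H.V.erase y))) ^ s))
    (h4 : ¬ IsAssociatedPrime (primeOf K F ⊔ Ideal.span {(X y : MvPolynomial σ K)})
        (MvPolynomial σ K ⧸
          ((coverIdeal K H.E) ^ (s + 1)).colon (Ideal.span {(X y : MvPolynomial σ K)}))) :
    IsAssociatedPrime (primeOf K F ⊔ Ideal.span {(X y : MvPolynomial σ K)})
        (MvPolynomial σ K ⧸ (coverIdeal K H.E) ^ s) ∧
      ¬ IsAssociatedPrime (primeOf K F ⊔ Ideal.span {(X y : MvPolynomial σ K)})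
        (MvPolynomial σ K ⧸ (coverIdeal K H.E) ^ (s + 1)) := by
  have hyF : y ∉ F := fun hy => Finset.notMem_erase y H.V (hF hy)
  set A : Set (σ →₀ ℕ) := ⋂ f ∈ H.E.erase ey, supportMeets f
  set B : Set (σ →₀ ℕ) := supportMeets (ey.erase y)
  have hA : IsUpperSet A := isUpperSet_iInter₂ fun f _ => isUpperSet_supportMeets f
  have hB : IsUpperSet B := isUpperSet_supportMeets _
  have hAy : IndepOf y A := indepOf_biInter fun f hf => indepOf_supportMeets fun hyf =>
    (Finset.mem_erase.1 hf).1 (huniq f (Finset.mem_erase.1 hf).2 hyf)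
  have hBy : IndepOf y B := indepOf_supportMeets (Finset.notMem_erase y ey)
  have hJ : coverIdeal K H.E = toIdeal K (extendByVar y A B) := by
    have hey : supportMeets ey = B ∪ supportMeets {y} := by
      rw [← supportMeets_insert, Finset.insert_erase hyey]
    rw [coverIdeal_eq_toIdeal, ← Finset.insert_erase heyE, Finset.set_biInter_insert, hey,
      Set.inter_comm]
    rfl
  have hJ' : coverIdeal K (insert (ey.erase y) (H.E.erase ey)) = toIdeal K (A ∩ B) := by
    rw [coverIdeal_eq_toIdeal, Finset.set_biInter_insert, Set.inter_comm]
  have hJ_tilde : coverIdeal K (H.E.filter (fun f => f ⊆ H.V.erase y)) = toIdeal K A := by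
    rw [H.filter_subset_erase_eq_erase hyey huniq, coverIdeal_eq_toIdeal]
  have hX : (X y : MvPolynomial σ K) = monomial (Finsupp.single y 1) 1 := rfl
  rw [hJ', ← toIdeal_nfoldSum, isAssociatedPrime_primeOf_iff (isUpperSet_nfoldSum (hA.inter hB) _)]
    at h1 h2
  rw [hJ_tilde, ← toIdeal_nfoldSum, isAssociatedPrime_primeOf_iff (isUpperSet_nfoldSum hA _)] at h3
  have hC := isUpperSet_nfoldSum (isUpperSet_extendByVar (y := y) hA hB)
  rw [← primeOf_insert, hJ, ← toIdeal_nfoldSum, hX, ← toIdeal_shift (hC _),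
    isAssociatedPrime_primeOf_iff (isUpperSet_shift (hC _) _)] at h4
  rw [← primeOf_insert, hJ, ← toIdeal_nfoldSum, ← toIdeal_nfoldSum,
    isAssociatedPrime_primeOf_iff (hC _), isAssociatedPrime_primeOf_iff (hC _)]
  exact ⟨exists_shift_nfoldSum_extendByVar hA hB hAy hBy hyF h1 fun v hv => h3 ⟨v, hv⟩,
    fun ⟨v, hv⟩ => (exists_shift_inter_or_exists_shift_shift_single hAy hBy hyF hv).elim h2 h4⟩

/-- Under Notation (*): suppose `p' ∈ Ass(J(H')^s)` but
`p' ∉ Ass(J(H')^{s+1})` for some `s > 0`. If moreover `p' ∉ Ass(J(H̃)^s)` and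
`p' + (y) ∉ Ass(J(H)^{s+1} : y)`, then `p' + (y) ∈ Ass(J(H)^s) ∖ Ass(J(H)^{s+1})`;
in particular `J(H)` fails the persistence property. -/
theorem persistence_fails {σ K : Type*} [DecidableEq σ] [Field K]
    (H : FinHypergraph σ) (y : σ) (ey : Finset σ)
    (hyV : y ∈ H.V) (heyE : ey ∈ H.E) (hyey : y ∈ ey)
    (huniq : ∀ f ∈ H.E, y ∈ f → f = ey)
    (s : ℕ) (hs : 0 < s) (F : Finset σ) (hF : F ⊆ H.V.erase y)
    (h1 : IsAssociatedPrime (primeOf K F)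
        (MvPolynomial σ K ⧸ (coverIdeal K (insert (ey.erase y) (H.E.erase ey))) ^ s))
    (h2 : ¬ IsAssociatedPrime (primeOf K F)
        (MvPolynomial σ K ⧸ (coverIdeal K (insert (ey.erase y) (H.E.erase ey))) ^ (s + 1)))
    (h3 : ¬ IsAssociatedPrime (primeOf K F)
        (MvPolynomial σ K ⧸ (coverIdeal K (H.E.filter (fun f => f ⊆ H.V.erase y))) ^ s))
    (h4 : ¬ IsAssociatedPrime (primeOf K F ⊔ Ideal.span {(X y : MvPolynomial σ K)})
        (MvPolynomial σ K ⧸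
          ((coverIdeal K H.E) ^ (s + 1)).colon (Ideal.span {(X y : MvPolynomial σ K)}))) :
    IsAssociatedPrime (primeOf K F ⊔ Ideal.span {(X y : MvPolynomial σ K)})
        (MvPolynomial σ K ⧸ (coverIdeal K H.E) ^ s) ∧
      ¬ IsAssociatedPrime (primeOf K F ⊔ Ideal.span {(X y : MvPolynomial σ K)})
        (MvPolynomial σ K ⧸ (coverIdeal K H.E) ^ (s + 1)) :=
  persistence_fails_general H y ey heyE hyey huniq s F hF h1 h2 h3 h4
end
end
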